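/- Assume the ItI relations g₁ = R^α₁₁ t₁ + R^α₁₃ t₃^α + h₁^α, g₃^α = R^α₃₁ t₁ + R^α₃₃ t₃^α + h₃^α, g₂ = R^β₂₂ t₂ + R^β₂₃ t₃^β + h₂^β, g₃^β = R^β₃₂ t₂ + R^β₃₃ t₃^β + h₃^β, together with the interface coupling t₃^α = −g₃^β and t₃^β = −g₃^α, and that W := I − R^β₃₃ R^α₃₃ is invertible. Then the exterior outgoing impedance data of the merged box satisfies g₁ = (R^α₁₁ + R^α₁₃ W⁻¹ R^β₃₃ R^α₃₁) t₁ − R^α₁₃ W⁻¹ R^β₃₂ t₂ + h₁^α + R^α₁₃ W⁻¹ (R^β₃₃ h₃^α − h₃^β) and g₂ = −R^β₂₃ (R^α₃₁ + R^α₃₃ W⁻¹ R^β₃₃ R^α₃₁) t₁ + (R^β₂₂ + R^β₂₃ R^α₃₃ W⁻¹ R^β₃₂) t₂ + h₂^β − R^β₂₃ (I + R^α₃₃ W⁻¹ R^β₃₃) h₃^α + R^β₂₃ R^α₃₃ W⁻¹ h₃^β. -/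

import Mathlib

/-!
Substituting each box's interface relation into the other's through the coupling
`t₃α = -g₃β`, `t₃β = -g₃α` leaves a single linear system `W t₃α = v` for the incoming
interface data, with `W = 1 - Rβ₃₃ Rα₃₃`. Once `t₃α = W⁻¹ v` is known, `g₁` and `g₂` follow
by substituting it (and `t₃β = -g₃α`) into the exterior relations of `α` and `β`.
-/

open Matrix

section InterfaceSystem

variable {R : Type*} [CommRing R] {ι₁ ι₂ ι₃ : Type*} [Fintype ι₁] [Fintype ι₂] [Fintype ι₃]
  [DecidableEq ι₃]
  {Rα₃₁ : Matrix ι₃ ι₁ R} {Rα₃₃ : Matrix ι₃ ι₃ R} {Rβ₃₂ : Matrix ι₃ ι₂ R} {Rβ₃₃ : Matrix ι₃ ι₃ R}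
  {t₁ : ι₁ → R} {t₂ : ι₂ → R} {t₃α t₃β g₃α g₃β h₃α h₃β : ι₃ → R}

theorem iti_interface_system
    (hα₃ : g₃α = Rα₃₁ *ᵥ t₁ + Rα₃₃ *ᵥ t₃α + h₃α)
    (hβ₃ : g₃β = Rβ₃₂ *ᵥ t₂ + Rβ₃₃ *ᵥ t₃β + h₃β)
    (hcα : t₃α = -g₃β) (hcβ : t₃β = -g₃α) :
    (1 - Rβ₃₃ * Rα₃₃) *ᵥ t₃α = (Rβ₃₃ * Rα₃₁) *ᵥ t₁ - Rβ₃₂ *ᵥ t₂ + Rβ₃₃ *ᵥ h₃α - h₃β := by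
  rw [sub_mulVec, one_mulVec]
  nth_rewrite 1 [hcα]
  rw [hβ₃, hcβ, hα₃]
  simp only [mulVec_add, mulVec_neg, ← mulVec_mulVec]
  abel

theorem iti_interface_incoming_eq
    (hα₃ : g₃α = Rα₃₁ *ᵥ t₁ + Rα₃₃ *ᵥ t₃α + h₃α)
    (hβ₃ : g₃β = Rβ₃₂ *ᵥ t₂ + Rβ₃₃ *ᵥ t₃β + h₃β)
    (hcα : t₃α = -g₃β) (hcβ : t₃β = -g₃α) (hW : IsUnit (1 - Rβ₃₃ * Rα₃₃)) :
    t₃α = (1 - Rβ₃₃ * Rα₃₃)⁻¹ *ᵥ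
      ((Rβ₃₃ * Rα₃₁) *ᵥ t₁ - Rβ₃₂ *ᵥ t₂ + Rβ₃₃ *ᵥ h₃α - h₃β) := by
  let := hW.invertible
  exact (inv_mulVec_eq_vec (iti_interface_system hα₃ hβ₃ hcα hcβ).symm).symm

end InterfaceSystem

/-- ItI merge: the exterior outgoing impedance data of the merged box. -/
theorem iti_merge_outgoing {n₁ n₂ n₃ : ℕ}
    (Rα₁₁ : Matrix (Fin n₁) (Fin n₁) ℂ) (Rα₁₃ : Matrix (Fin n₁) (Fin n₃) ℂ)
    (Rα₃₁ : Matrix (Fin n₃) (Fin n₁) ℂ) (Rα₃₃ : Matrix (Fin n₃) (Fin n₃) ℂ)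
    (Rβ₂₂ : Matrix (Fin n₂) (Fin n₂) ℂ) (Rβ₂₃ : Matrix (Fin n₂) (Fin n₃) ℂ)
    (Rβ₃₂ : Matrix (Fin n₃) (Fin n₂) ℂ) (Rβ₃₃ : Matrix (Fin n₃) (Fin n₃) ℂ)
    (t₁ g₁ h₁α : Fin n₁ → ℂ) (t₂ g₂ h₂β : Fin n₂ → ℂ)
    (t₃α t₃β g₃α g₃β h₃α h₃β : Fin n₃ → ℂ)
    (hα₁ : g₁ = Rα₁₁.mulVec t₁ + Rα₁₃.mulVec t₃α + h₁α)
    (hα₃ : g₃α = Rα₃₁.mulVec t₁ + Rα₃₃.mulVec t₃α + h₃α)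
    (hβ₂ : g₂ = Rβ₂₂.mulVec t₂ + Rβ₂₃.mulVec t₃β + h₂β)
    (hβ₃ : g₃β = Rβ₃₂.mulVec t₂ + Rβ₃₃.mulVec t₃β + h₃β)
    (hcα : t₃α = -g₃β) (hcβ : t₃β = -g₃α)
    (hW : IsUnit (1 - Rβ₃₃ * Rα₃₃)) :
    g₁ = (Rα₁₁ + Rα₁₃ * (1 - Rβ₃₃ * Rα₃₃)⁻¹ * Rβ₃₃ * Rα₃₁).mulVec t₁ -
        (Rα₁₃ * (1 - Rβ₃₃ * Rα₃₃)⁻¹ * Rβ₃₂).mulVec t₂ + h₁α +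
        (Rα₁₃ * (1 - Rβ₃₃ * Rα₃₃)⁻¹).mulVec (Rβ₃₃.mulVec h₃α - h₃β) ∧
    g₂ = -(Rβ₂₃ * (Rα₃₁ + Rα₃₃ * (1 - Rβ₃₃ * Rα₃₃)⁻¹ * Rβ₃₃ * Rα₃₁)).mulVec t₁ +
        (Rβ₂₂ + Rβ₂₃ * Rα₃₃ * (1 - Rβ₃₃ * Rα₃₃)⁻¹ * Rβ₃₂).mulVec t₂ + h₂β -
        (Rβ₂₃ * (1 + Rα₃₃ * (1 - Rβ₃₃ * Rα₃₃)⁻¹ * Rβ₃₃)).mulVec h₃α +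
        (Rβ₂₃ * Rα₃₃ * (1 - Rβ₃₃ * Rα₃₃)⁻¹).mulVec h₃β := by
  have ht₃α := iti_interface_incoming_eq hα₃ hβ₃ hcα hcβ hW
  constructor
  · rw [hα₁, ht₃α]
    simp only [add_mulVec, mulVec_add, mulVec_sub, ← mulVec_mulVec]
    abel
  · rw [hβ₂, hcβ, hα₃, ht₃α]
    simp only [add_mulVec, mulVec_add, mulVec_sub, mulVec_neg, ← mulVec_mulVec,
      one_mulVec]
    abel
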